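/- Let U and V be n×r real matrices with columns u₁,…,u_r and v₁,…,v_r respectively, and H an n×n real matrix. Then det(H + U Vᵀ) = det(H) + ∑_{i=1}^{r} vᵢᵀ · adj(H + Δ_{i-1}) · uᵢ, where Δᵢ = ∑_{j=1}^{i} uⱼ vⱼᵀ. -/
import Mathlib

open Matrix

lemma det_row_scaled_eq_zero {n : ℕ} (u v : Fin n → ℝ) (N : Matrix (Fin n) (Fin n) ℝ)
    (x y : Fin n) (hxy : x ≠ y) (hx : N x = u x • v) (hy : N y = u y • v) :
    N.det = 0 := by
  have e1 : N = N.updateRow x (u x • v) := by rw [← hx, updateRow_eq_self]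
  rw [e1, det_updateRow_smul]
  have hy' : (N.updateRow x v) y = u y • v := by rw [updateRow_ne hxy.symm, hy]
  have e2 : N.updateRow x v = (N.updateRow x v).updateRow y (u y • v) := by
    rw [← hy', updateRow_eq_self]
  rw [e2, det_updateRow_smul]
  have : (((N.updateRow x v).updateRow y v)).det = 0 := by
    apply det_zero_of_row_eq hxy
    rw [updateRow_ne hxy, updateRow_self, updateRow_self]
  rw [this, mul_zero, mul_zero]

lemma det_add_vecMulVec_aux {n : ℕ} (A : Matrix (Fin n) (Fin n) ℝ) (u v : Fin n → ℝ) :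
    (A + vecMulVec u v).det = A.det + ∑ i, u i * (A.updateRow i v).det := by
  classical
  set m : Fin n → (Fin n → ℝ) := fun i => u i • v with hm
  have h1 : (A + vecMulVec u v).det
      = (detRowAlternating : (Fin n → ℝ) [⋀^Fin n]→ₗ[ℝ] ℝ).toMultilinearMap
          (m + fun i => A i) := by
    congr 1
    ext i j
    simp only [Matrix.add_apply, vecMulVec_apply, Pi.add_apply, Pi.smul_apply, smul_eq_mul,
      Matrix.of_apply]
    rw [hm]
    simp only [Pi.smul_apply, smul_eq_mul]
    ring
  rw [h1, MultilinearMap.map_add_univ]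
  have hzero : ∀ s : Finset (Fin n), ¬ s.card ≤ 1 →
      (detRowAlternating : (Fin n → ℝ) [⋀^Fin n]→ₗ[ℝ] ℝ).toMultilinearMap
        (s.piecewise m (fun i => A i)) = 0 := by
    intro s hs
    obtain ⟨i, hi, j, hj, hij⟩ := Finset.one_lt_card.mp (show 1 < s.card by omega)
    have : (detRowAlternating : (Fin n → ℝ) [⋀^Fin n]→ₗ[ℝ] ℝ).toMultilinearMap
        (s.piecewise m (fun i => A i))
        = (Matrix.of (s.piecewise m (fun i => A i))).det := rfl
    rw [this]
    refine det_row_scaled_eq_zero u v _ i j hij ?_ ?_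
    · exact Finset.piecewise_eq_of_mem s m (fun i => A i) hi
    · exact Finset.piecewise_eq_of_mem s m (fun i => A i) hj
  have hsplit := Finset.sum_filter_add_sum_filter_not (Finset.univ : Finset (Finset (Fin n)))
    (fun s => s.card ≤ 1)
    (fun s => (detRowAlternating : (Fin n → ℝ) [⋀^Fin n]→ₗ[ℝ] ℝ).toMultilinearMap
        (s.piecewise m (fun i => A i)))
  rw [← hsplit]
  have h2 : ∑ s ∈ Finset.univ.filter (fun s : Finset (Fin n) => ¬ s.card ≤ 1),
      (detRowAlternating : (Fin n → ℝ) [⋀^Fin n]→ₗ[ℝ] ℝ).toMultilinearMap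
        (s.piecewise m (fun i => A i)) = 0 :=
    Finset.sum_eq_zero fun s hs => hzero s (Finset.mem_filter.mp hs).2
  rw [h2, add_zero]
  have hset : Finset.univ.filter (fun s : Finset (Fin n) => s.card ≤ 1)
      = insert ∅ (Finset.univ.image (fun i : Fin n => ({i} : Finset (Fin n)))) := by
    ext s
    simp only [Finset.mem_filter, Finset.mem_univ, true_and, Finset.mem_insert,
      Finset.mem_image]
    constructor
    · intro h
      rcases s.eq_empty_or_nonempty with rfl | ⟨x, hx⟩
      · exact Or.inl rfl
      · refine Or.inr ⟨x, ?_⟩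
        exact (Finset.eq_singleton_iff_unique_mem.mpr
          ⟨hx, fun y hy => Finset.card_le_one.mp h y hy x hx⟩).symm
    · rintro (rfl | ⟨x, rfl⟩) <;> simp
  rw [hset, Finset.sum_insert (by simp), Finset.sum_image
    (fun a _ b _ h => Finset.singleton_injective h)]
  have hempty : (detRowAlternating : (Fin n → ℝ) [⋀^Fin n]→ₗ[ℝ] ℝ).toMultilinearMap
      ((∅ : Finset (Fin n)).piecewise m (fun i => A i)) = A.det := by
    have : (∅ : Finset (Fin n)).piecewise m (fun i => A i) = fun i => A i :=
      Finset.piecewise_empty _ _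
    rw [this]
    rfl
  rw [hempty]
  congr 1
  refine Finset.sum_congr rfl fun i _ => ?_
  · have hp : ({i} : Finset (Fin n)).piecewise m (fun i => A i)
        = Function.update (fun i => A i) i (u i • v) := Finset.piecewise_singleton _ _ _
    rw [hp]
    have : (detRowAlternating : (Fin n → ℝ) [⋀^Fin n]→ₗ[ℝ] ℝ).toMultilinearMap
        (Function.update (fun i => A i) i (u i • v))
        = (A.updateRow i (u i • v)).det := rfl
    rw [this, det_updateRow_smul]

lemma det_add_vecMulVec {n : ℕ} (A : Matrix (Fin n) (Fin n) ℝ) (u v : Fin n → ℝ) :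
    (A + vecMulVec u v).det = A.det + ∑ a, ∑ b, v a * A.adjugate a b * u b := by
  rw [det_add_vecMulVec_aux]
  congr 1
  have hcr : ∀ i, (A.updateRow i v).det = ∑ a, A.adjugate a i * v a := by
    intro i
    have h := congrFun (cramer_eq_adjugate_mulVec Aᵀ v) i
    rw [cramer_apply, updateCol_transpose, det_transpose] at h
    rw [h]
    simp [mulVec, dotProduct, ← adjugate_transpose]
  rw [Finset.sum_comm]
  refine Finset.sum_congr rfl fun i _ => ?_
  rw [hcr, Finset.mul_sum]
  refine Finset.sum_congr rfl fun a _ => by ring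

theorem gmdl_matrix_product_form (n r : ℕ) (H : Matrix (Fin n) (Fin n) ℝ)
    (U V : Matrix (Fin n) (Fin r) ℝ) :
    (H + U * Vᵀ).det =
      H.det + ∑ i : Fin r, ∑ a, ∑ b,
        V a i *
          (H + ∑ j ∈ Finset.univ.filter (fun j : Fin r => (j : ℕ) < (i : ℕ)),
              Matrix.vecMulVec (fun a => U a j) (fun b => V b j)).adjugate a b *
          U b i := by
  classical
  set Δ : ℕ → Matrix (Fin n) (Fin n) ℝ := fun k =>
    ∑ j ∈ Finset.univ.filter (fun j : Fin r => (j : ℕ) < k),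
      Matrix.vecMulVec (fun a => U a j) (fun b => V b j) with hΔ
  have key : ∀ k, (H + Δ k).det = H.det +
      ∑ i ∈ Finset.univ.filter (fun i : Fin r => (i : ℕ) < k),
        ∑ a, ∑ b, V a i * (H + Δ (i : ℕ)).adjugate a b * U b i := by
    intro k
    induction k with
    | zero => simp [hΔ]
    | succ k ih =>
      by_cases hk : k < r
      · have hfil : Finset.univ.filter (fun j : Fin r => (j : ℕ) < k + 1)
            = insert ⟨k, hk⟩ (Finset.univ.filter (fun j : Fin r => (j : ℕ) < k)) := by
          ext j
          simp only [Finset.mem_filter, Finset.mem_univ, true_and, Finset.mem_insert,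
            Fin.ext_iff]
          omega
        have hnot : (⟨k, hk⟩ : Fin r) ∉
            Finset.univ.filter (fun j : Fin r => (j : ℕ) < k) := by simp
        have hΔk : Δ (k + 1) = Δ k +
            Matrix.vecMulVec (fun a => U a ⟨k, hk⟩) (fun b => V b ⟨k, hk⟩) := by
          rw [hΔ]
          simp only
          rw [hfil, Finset.sum_insert hnot, add_comm]
        rw [hΔk, ← add_assoc, det_add_vecMulVec, ih, hfil, Finset.sum_insert hnot]
        ring
      · have hfil : Finset.univ.filter (fun j : Fin r => (j : ℕ) < k + 1)
            = Finset.univ.filter (fun j : Fin r => (j : ℕ) < k) := by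
          ext j
          simp only [Finset.mem_filter, Finset.mem_univ, true_and]
          have := j.isLt
          omega
        have hΔk : Δ (k + 1) = Δ k := by rw [hΔ]; simp only [hfil]
        rw [hΔk, ih, hfil]
  have hUV : U * Vᵀ = Δ r := by
    rw [hΔ]
    ext a b
    simp only [Matrix.mul_apply, Matrix.transpose_apply, Matrix.sum_apply,
      Matrix.vecMulVec_apply]
    rw [Finset.sum_filter]
    exact Finset.sum_congr rfl fun j _ => by simp [j.isLt]
  have hufil : Finset.univ.filter (fun i : Fin r => (i : ℕ) < r) = Finset.univ := by
    ext i; simp [i.isLt]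
  rw [hUV, key r, hufil]
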